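/- arXiv:2104.12331 — 3 statements merged into one kernel-verified Lean document; each statement's English description precedes it below -/
import Mathlib

section
/- For every integer a ≥ 2, there is no 3-covering of [a]×[2]. That is, there do not exist nonempty proper subsets A_1, A_2, A_3 ⊊ [a] and nonempty proper subsets B_1, B_2, B_3 ⊊ [2] = {1,2} with [a]×[2] ⊆ (A_1×B_1) ∪ (A_2×B_2) ∪ (A_3×B_3). -/
/-! Every row `[a] × {y}` of a covering meets at least two of the rectangles, since a row
covered by a single rectangle `A_ℓ × B_ℓ` forces `A_ℓ = [a]`. For `b = 2` each `B_ℓ` is a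
singleton, so the two rows need four distinct rectangles. -/

/-- A `k`-covering of `[a]×[b]`: subsets `A_ℓ ⊆ [a] = {1,…,a}` and `B_ℓ ⊆ [b] = {1,…,b}`,
each a nonempty proper subset, with `[a]×[b] ⊆ ⋃_ℓ (A_ℓ × B_ℓ)`. -/
def IsCovering (a b k : ℕ) (A B : Fin k → Finset ℕ) : Prop :=
  (∀ ℓ : Fin k, A ℓ ⊆ Finset.Icc 1 a ∧ (A ℓ).Nonempty ∧ A ℓ ≠ Finset.Icc 1 a) ∧
  (∀ ℓ : Fin k, B ℓ ⊆ Finset.Icc 1 b ∧ (B ℓ).Nonempty ∧ B ℓ ≠ Finset.Icc 1 b) ∧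
  (∀ x ∈ Finset.Icc 1 a, ∀ y ∈ Finset.Icc 1 b, ∃ ℓ : Fin k, x ∈ A ℓ ∧ y ∈ B ℓ)

namespace IsCovering

open Finset

variable {a b k : ℕ} {A B : Fin k → Finset ℕ}

theorem exists_ne_mem (h : IsCovering a b k A B) {y : ℕ} (hy : y ∈ Icc 1 b) (ℓ₀ : Fin k) :
    ∃ ℓ ≠ ℓ₀, y ∈ B ℓ := by
  by_contra! hrow
  have hfull : A ℓ₀ = Icc 1 a := by
    refine (h.1 ℓ₀).1.antisymm fun x hx => ?_
    obtain ⟨ℓ, hxA, hyB⟩ := h.2.2 x hx y hy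
    obtain rfl : ℓ = ℓ₀ := by_contra fun hne => hrow ℓ hne hyB
    exact hxA
  exact (h.1 ℓ₀).2.2 hfull

theorem one_lt_card_filter_mem [NeZero k] (h : IsCovering a b k A B) {y : ℕ}
    (hy : y ∈ Icc 1 b) : 1 < #{ℓ | y ∈ B ℓ} := by
  obtain ⟨ℓ₁, -, h₁⟩ := h.exists_ne_mem hy 0
  obtain ⟨ℓ₂, hne, h₂⟩ := h.exists_ne_mem hy ℓ₁
  exact one_lt_card.2 ⟨ℓ₂, by simpa using h₂, ℓ₁, by simpa using h₁, hne⟩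

theorem not_one_mem_and_two_mem (h : IsCovering a 2 k A B) (ℓ : Fin k) :
    ¬ (1 ∈ B ℓ ∧ 2 ∈ B ℓ) := by
  rintro ⟨h₁, h₂⟩
  refine (h.2.1 ℓ).2.2 ((h.2.1 ℓ).1.antisymm ?_)
  simp [show Icc 1 2 = {1, 2} by rfl, insert_subset_iff, h₁, h₂]

theorem four_le [NeZero k] (h : IsCovering a 2 k A B) : 4 ≤ k := by
  have hrow₁ := h.one_lt_card_filter_mem (y := 1) (by simp)
  have hrow₂ := h.one_lt_card_filter_mem (y := 2) (by simp)
  have hdisj : Disjoint (univ.filter (1 ∈ B ·)) (univ.filter (2 ∈ B ·)) :=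
    disjoint_filter.2 fun ℓ _ h₁ h₂ => h.not_one_mem_and_two_mem ℓ ⟨h₁, h₂⟩
  have hunion := card_le_univ (univ.filter (1 ∈ B ·) ∪ univ.filter (2 ∈ B ·))
  rw [card_union_of_disjoint hdisj, Fintype.card_fin] at hunion
  omega

end IsCovering

theorem stmt_7_general (a : ℕ) :
    ¬ ∃ A B : Fin 3 → Finset ℕ, IsCovering a 2 3 A B := by
  rintro ⟨A, B, h⟩
  exact absurd h.four_le (by norm_num)

/-- For every `a ≥ 2`, there is no 3-covering of `[a]×[2]`. -/
theorem stmt_7 (a : ℕ) (ha : 2 ≤ a) :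
    ¬ ∃ A B : Fin 3 → Finset ℕ, IsCovering a 2 3 A B :=
  stmt_7_general a
end

section
/- For every integer b ≥ 2, there is no 3-covering of [2]×[b]. That is, there do not exist nonempty proper subsets A_1, A_2, A_3 ⊊ [2] = {1,2} and nonempty proper subsets B_1, B_2, B_3 ⊊ [b] with [2]×[b] ⊆ (A_1×B_1) ∪ (A_2×B_2) ∪ (A_3×B_3). -/
namespace IsCovering

open Finset

variable {a b k : ℕ} {A B : Fin k → Finset ℕ}

theorem nonempty_Icc_right [NeZero k] (h : IsCovering a b k A B) : (Icc 1 b).Nonempty :=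
  (h.2.1 0).2.1.mono (h.2.1 0).1

theorem card_le_pred (h : IsCovering a b k A B) (ℓ : Fin k) : #(A ℓ) ≤ a - 1 := by
  have hlt : #(A ℓ) < #(Icc 1 a) :=
    card_lt_card ((h.1 ℓ).1.ssubset_of_ne (h.1 ℓ).2.2)
  rw [Nat.card_Icc] at hlt
  omega

theorem two_le_card_filter_mem [NeZero k] (h : IsCovering a b k A B) {x : ℕ}
    (hx : x ∈ Icc 1 a) : 2 ≤ #{ℓ | x ∈ A ℓ} := by
  by_contra! hlt
  obtain ⟨y₀, hy₀⟩ := h.nonempty_Icc_right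
  obtain ⟨ℓ₀, hxℓ₀, -⟩ := h.2.2 x hx y₀ hy₀
  have hunique : ∀ ℓ, x ∈ A ℓ → ℓ = ℓ₀ := fun ℓ hxℓ =>
    card_le_one.mp (Nat.le_of_lt_succ hlt) ℓ (by simpa using hxℓ) ℓ₀ (by simpa using hxℓ₀)
  refine (h.2.1 ℓ₀).2.2 (Subset.antisymm (h.2.1 ℓ₀).1 fun y hy => ?_)
  obtain ⟨ℓ, hxℓ, hyℓ⟩ := h.2.2 x hx y hy
  exact hunique ℓ hxℓ ▸ hyℓ

theorem sum_card_filter_mem_eq (h : IsCovering a b k A B) :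
    ∑ x ∈ Icc 1 a, #{ℓ | x ∈ A ℓ} = ∑ ℓ, #(A ℓ) :=
  (sum_card_bipartiteAbove_eq_sum_card_bipartiteBelow (fun x ℓ => x ∈ A ℓ)).trans <|
    sum_congr rfl fun ℓ _ => by
      rw [bipartiteBelow, filter_mem_eq_inter, inter_eq_right.mpr (h.1 ℓ).1]

theorem two_mul_le_mul_pred [NeZero k] (h : IsCovering a b k A B) : 2 * a ≤ k * (a - 1) :=
  calc 2 * a = ∑ _x ∈ Icc 1 a, 2 := by simp [mul_comm]
    _ ≤ ∑ x ∈ Icc 1 a, #{ℓ | x ∈ A ℓ} := sum_le_sum fun _ hx => h.two_le_card_filter_mem hx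
    _ = ∑ ℓ, #(A ℓ) := h.sum_card_filter_mem_eq
    _ ≤ ∑ _ℓ : Fin k, (a - 1) := sum_le_sum fun ℓ _ => h.card_le_pred ℓ
    _ = k * (a - 1) := by simp

end IsCovering

theorem stmt_8_general (b : ℕ) :
    ¬ ∃ A B : Fin 3 → Finset ℕ, IsCovering 2 b 3 A B := by
  rintro ⟨A, B, h⟩
  have := h.two_mul_le_mul_pred
  omega

/-- For every `b ≥ 2`, there is no 3-covering of `[2]×[b]`. -/
theorem stmt_8 (b : ℕ) (hb : 2 ≤ b) :
    ¬ ∃ A B : Fin 3 → Finset ℕ, IsCovering 2 b 3 A B :=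
  stmt_8_general b
end

section
/- For all integers a, b ≥ 3, k(a,b) = 3. That is, 3 is the smallest integer k ≥ 2 such that there exists a k-covering of [a]×[b]: a 3-covering of [a]×[b] exists, and no 2-covering of [a]×[b] exists. -/
/-!
No 2-covering exists: choosing `x ∉ A₀` and `y ∉ B₁`, the point `(x, y)` lies in neither
`A₀ × B₀` nor `A₁ × B₁`. For `a, b ≥ 3` the three rectangles
`[1, a-1] × [1, b-1]`, `[2, a] × [2, b]` and `{1, a} × {1, b}` do cover: a point missed by
the first two has one coordinate at a lower end and one at an upper end, so it is a corner.
-/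

open Finset

theorem not_isCovering_two (a b : ℕ) (A B : Fin 2 → Finset ℕ) : ¬ IsCovering a b 2 A B := by
  rintro ⟨hA, hB, hcover⟩
  obtain ⟨x, hx, hxA⟩ := exists_of_ssubset ((hA 0).1.ssubset_of_ne (hA 0).2.2)
  obtain ⟨y, hy, hyB⟩ := exists_of_ssubset ((hB 1).1.ssubset_of_ne (hB 1).2.2)
  obtain ⟨ℓ, hxℓ, hyℓ⟩ := hcover x hx y hy
  fin_cases ℓ
  · exact hxA hxℓ
  · exact hyB hyℓ

def threeSides (n : ℕ) : Fin 3 → Finset ℕ := ![Icc 1 (n - 1), Icc 2 n, {1, n}]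

theorem threeSides_isProperSubset {n : ℕ} (hn : 3 ≤ n) (ℓ : Fin 3) :
    threeSides n ℓ ⊆ Icc 1 n ∧ (threeSides n ℓ).Nonempty ∧ threeSides n ℓ ≠ Icc 1 n := by
  have missing : ∃ m ∈ Icc 1 n, m ∉ threeSides n ℓ := by
    fin_cases ℓ
    · exact ⟨n, by simp [threeSides]; omega⟩
    · exact ⟨1, by simp [threeSides]; omega⟩
    · exact ⟨2, by simp [threeSides]; omega⟩
  obtain ⟨m, hm, hmℓ⟩ := missing
  refine ⟨?_, ?_, fun h => hmℓ (h ▸ hm)⟩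
  · fin_cases ℓ <;> intro x <;> simp [threeSides] <;> omega
  · fin_cases ℓ
    · exact ⟨1, by simp [threeSides]; omega⟩
    · exact ⟨2, by simp [threeSides]; omega⟩
    · exact ⟨1, by simp [threeSides]⟩

theorem exists_mem_threeSides {a b x y : ℕ} (ha : 2 ≤ a) (hb : 2 ≤ b)
    (hx : x ∈ Icc 1 a) (hy : y ∈ Icc 1 b) :
    ∃ ℓ : Fin 3, x ∈ threeSides a ℓ ∧ y ∈ threeSides b ℓ := by
  simp only [mem_Icc] at hx hy
  by_cases hlow : x < a ∧ y < b
  · exact ⟨0, by simp [threeSides]; omega, by simp [threeSides]; omega⟩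
  by_cases hhigh : 2 ≤ x ∧ 2 ≤ y
  · exact ⟨1, by simp [threeSides]; omega, by simp [threeSides]; omega⟩
  · exact ⟨2, by simp [threeSides]; omega, by simp [threeSides]; omega⟩

theorem isCovering_threeSides {a b : ℕ} (ha : 3 ≤ a) (hb : 3 ≤ b) :
    IsCovering a b 3 (threeSides a) (threeSides b) :=
  ⟨threeSides_isProperSubset ha, threeSides_isProperSubset hb,
    fun _ hx _ hy => exists_mem_threeSides (by omega) (by omega) hx hy⟩

/-- For all `a, b ≥ 3`, `k(a,b) = 3`: the least `k ≥ 2` such that a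
`k`-covering of `[a]×[b]` exists is `3`. -/
theorem stmt_10 (a b : ℕ) (ha : 3 ≤ a) (hb : 3 ≤ b) :
    IsLeast {k : ℕ | 2 ≤ k ∧ ∃ A B : Fin k → Finset ℕ, IsCovering a b k A B} 3 := by
  refine ⟨⟨by norm_num, _, _, isCovering_threeSides ha hb⟩, ?_⟩
  rintro k ⟨hk, A, B, hAB⟩
  by_contra hlt
  obtain rfl : k = 2 := by omega
  exact not_isCovering_two a b A B hAB
end
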